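/- The polynomial eq_2 = ((-1 + 3 i√7)/4) U_0^3 + ((-7 + i√7)/2)(2 U_1 U_2 U_3 + 8 U_4 U_5 U_6 − U_7 U_8 U_9) + (3 − i√7) U_0 (U_1 U_4 + U_2 U_5 + U_3 U_6) + 4 U_0 (U_1 U_7 + U_2 U_8 + U_3 U_9) is invariant under both g7 and g3. -/
import Mathlib


open Complex

noncomputable def xi : ℂ := Complex.exp (2 * Real.pi * Complex.I / 7)

def w7 : Fin 10 → ℕ := ![0, 6, 5, 3, 1, 2, 4, 1, 2, 4]

noncomputable def g7 : (Fin 10 → ℂ) → (Fin 10 → ℂ) := fun u i => xi ^ w7 i * u i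

def tau : Fin 10 → Fin 10 := ![0, 2, 3, 1, 5, 6, 4, 8, 9, 7]

def g3 : (Fin 10 → ℂ) → (Fin 10 → ℂ) := fun u i => u (tau i)

/-- The cubic `eq₂`. -/
noncomputable def eq2 : (Fin 10 → ℂ) → ℂ := fun u =>
  ((-1 + 3 * Complex.I * Real.sqrt 7) / 4) * (u 0) ^ 3 +
  ((-7 + Complex.I * Real.sqrt 7) / 2) *
    (2 * (u 1 * u 2 * u 3) + 8 * (u 4 * u 5 * u 6) - u 7 * u 8 * u 9) +
  (3 - Complex.I * Real.sqrt 7) * u 0 * (u 1 * u 4 + u 2 * u 5 + u 3 * u 6) +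
  4 * u 0 * (u 1 * u 7 + u 2 * u 8 + u 3 * u 9)

lemma xi_pow_seven : xi ^ 7 = 1 := by
  rw [xi, ← Complex.exp_nat_mul]
  push_cast
  have : (7 : ℂ) * (2 * Real.pi * Complex.I / 7) = 2 * Real.pi * Complex.I := by ring
  rw [this, Complex.exp_two_pi_mul_I]

/-- `eq₂` is invariant under both `g7` and `g3`. -/
theorem eq2_invariant : (∀ u, eq2 (g7 u) = eq2 u) ∧ (∀ u, eq2 (g3 u) = eq2 u) := by
  constructor
  · intro u
    have h := xi_pow_seven
    simp only [eq2, g7, show w7 0 = 0 from rfl, show w7 1 = 6 from rfl, show w7 2 = 5 from rfl, show w7 3 = 3 from rfl, show w7 4 = 1 from rfl, show w7 5 = 2 from rfl, show w7 6 = 4 from rfl, show w7 7 = 1 from rfl, show w7 8 = 2 from rfl, show w7 9 = 4 from rfl]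
    norm_num
    linear_combination (((-7 : ℂ) + Complex.I * Real.sqrt 7) / 2 * 2 * (xi ^ 7 + 1) *
        (u 1 * u 2 * u 3) +
      ((-7 : ℂ) + Complex.I * Real.sqrt 7) / 2 * 8 * (u 4 * u 5 * u 6) -
      ((-7 : ℂ) + Complex.I * Real.sqrt 7) / 2 * (u 7 * u 8 * u 9) +
      ((3 : ℂ) - Complex.I * Real.sqrt 7) * u 0 * (u 1 * u 4 + u 2 * u 5 + u 3 * u 6) +
      4 * u 0 * (u 1 * u 7 + u 2 * u 8 + u 3 * u 9)) * h
  · intro u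
    simp only [eq2, g3, show tau 0 = 0 from rfl, show tau 1 = 2 from rfl, show tau 2 = 3 from rfl, show tau 3 = 1 from rfl, show tau 4 = 5 from rfl, show tau 5 = 6 from rfl, show tau 6 = 4 from rfl, show tau 7 = 8 from rfl, show tau 8 = 9 from rfl, show tau 9 = 7 from rfl]
    ring
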